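/- arXiv:1007.2762 — 6 statements merged into one kernel-verified Lean document; each statement's English description precedes it below -/
import Mathlib

section
/- For a real parameter m ≠ 0 and real numbers a, b, c, d with abcd = 1, the four points (x_t, y_t) = ((1/(2m))(t - 1/t), (1/2)(t + 1/t)) for t = a, b, c, d all lie on the circle 4m²(x²+y²) + m(m²+1)(bcd+acd+abd+abc-a-b-c-d)x - (m²+1)(bcd+acd+abd+abc+a+b+c+d)y + (m²+1)(ab+ac+ad+bc+bd+cd) - 2(m²-1) = 0. -/
set_option maxHeartbeats 2000000


/-- If `abcd = 1`, the four points `((1/(2m))(t - 1/t), (1/2)(t + 1/t))` for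
`t = a, b, c, d` on the hyperbola `y² - m²x² = 1` all lie on the circle (6.1). -/
theorem four_points_on_circle (m a b c d : ℝ) (hm : m ≠ 0)
    (ha : a ≠ 0) (hb : b ≠ 0) (hc : c ≠ 0) (hd : d ≠ 0) (habcd : a * b * c * d = 1) :
    ∀ t ∈ ({a, b, c, d} : Set ℝ),
      let x : ℝ := (1 / (2 * m)) * (t - 1 / t)
      let y : ℝ := (1 / 2) * (t + 1 / t)
      4 * m ^ 2 * (x ^ 2 + y ^ 2)
        + m * (m ^ 2 + 1) * (b * c * d + a * c * d + a * b * d + a * b * c - a - b - c - d) * x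
        - (m ^ 2 + 1) * (b * c * d + a * c * d + a * b * d + a * b * c + a + b + c + d) * y
        + (m ^ 2 + 1) * (a * b + a * c + a * d + b * c + b * d + c * d)
        - 2 * (m ^ 2 - 1) = 0 := by
  have hd' : d = 1 / (a * b * c) := by
    field_simp
    nlinarith [habcd]
  subst hd'
  intro t ht
  simp only [Set.mem_insert_iff, Set.mem_singleton_iff] at ht
  rcases ht with rfl | rfl | rfl | rfl <;> (intro x y; simp only [x, y]; field_simp; ring)
end

section
/- Four points on the hyperbola y² - m²x² = 1, given parametrically by (x_t, y_t) = ((1/(2m))(t - 1/t), (1/2)(t + 1/t)) with nonzero parameters a, b, c, d (pairwise distinct), are concyclic if and only if abcd = 1. -/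
/-- The point of the hyperbola `y² - m²x² = 1` with parameter `t`. -/
noncomputable def hypPt (m t : ℝ) : ℝ × ℝ :=
  ((1 / (2 * m)) * (t - 1 / t), (1 / 2) * (t + 1 / t))

private lemma card_le_three_aux (x y z : ℝ) : ({x, y, z} : Finset ℝ).card ≤ 3 := by
  have h1 := Finset.card_insert_le x ({y, z} : Finset ℝ)
  have h2 := Finset.card_insert_le y ({z} : Finset ℝ)
  simp only [Finset.card_singleton] at h1 h2
  omega

set_option maxHeartbeats 2000000 in
/-- Four points on the hyperbola `y² - m²x² = 1`, with pairwise distinct nonzero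
parameters `a, b, c, d`, are concyclic if and only if `abcd = 1`. -/
theorem concyclic_iff_product_one (m a b c d : ℝ) (hm : m ≠ 0)
    (ha : a ≠ 0) (hb : b ≠ 0) (hc : c ≠ 0) (hd : d ≠ 0)
    (hdist : ({a, b, c, d} : Finset ℝ).card = 4) :
    (∃ cx cy r : ℝ, ∀ P ∈ ({hypPt m a, hypPt m b, hypPt m c, hypPt m d} : Set (ℝ × ℝ)),
        (P.1 - cx) ^ 2 + (P.2 - cy) ^ 2 = r ^ 2) ↔ a * b * c * d = 1 := by
  have hab : a ≠ b := by
    intro h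
    rw [h] at hdist
    have hset : ({b, b, c, d} : Finset ℝ) = ({b, c, d} : Finset ℝ) := by
      ext t
      simp only [Finset.mem_insert, Finset.mem_singleton]
      tauto
    rw [hset] at hdist
    have h3 := card_le_three_aux b  c  d
    omega
  have hac : a ≠ c := by
    intro h
    rw [h] at hdist
    have hset : ({c, b, c, d} : Finset ℝ) = ({c, b, d} : Finset ℝ) := by
      ext t
      simp only [Finset.mem_insert, Finset.mem_singleton]
      tauto
    rw [hset] at hdist
    have h3 := card_le_three_aux c  b  d
    omega
  have had : a ≠ d := by
    intro h
    rw [h] at hdist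
    have hset : ({d, b, c, d} : Finset ℝ) = ({d, b, c} : Finset ℝ) := by
      ext t
      simp only [Finset.mem_insert, Finset.mem_singleton]
      tauto
    rw [hset] at hdist
    have h3 := card_le_three_aux d  b  c
    omega
  have hbc : b ≠ c := by
    intro h
    rw [h] at hdist
    have hset : ({a, c, c, d} : Finset ℝ) = ({a, c, d} : Finset ℝ) := by
      ext t
      simp only [Finset.mem_insert, Finset.mem_singleton]
      tauto
    rw [hset] at hdist
    have h3 := card_le_three_aux a  c  d
    omega
  have hbd : b ≠ d := by
    intro h
    rw [h] at hdist
    have hset : ({a, d, c, d} : Finset ℝ) = ({a, d, c} : Finset ℝ) := by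
      ext t
      simp only [Finset.mem_insert, Finset.mem_singleton]
      tauto
    rw [hset] at hdist
    have h3 := card_le_three_aux a  d  c
    omega
  have hcd : c ≠ d := by
    intro h
    rw [h] at hdist
    have hset : ({a, b, d, d} : Finset ℝ) = ({a, b, d} : Finset ℝ) := by
      ext t
      simp only [Finset.mem_insert, Finset.mem_singleton]
      tauto
    rw [hset] at hdist
    have h3 := card_le_three_aux a  b  d
    omega
  constructor
  · rintro ⟨cx, cy, r, h⟩
    have Pa : (1+m^2)*a^4 + (-4*m*cx-4*m^2*cy)*a^3 + (2*m^2-2+4*m^2*(cx^2+cy^2-r^2))*a^2 + (4*m*cx-4*m^2*cy)*a + (1+m^2) = 0 := by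
      have E0 := h (hypPt m a) (by simp)
      have E : ((1/(2*m))*(a-1/a) - cx)^2 + ((1/2)*(a+1/a) - cy)^2 = r^2 := by
        simpa [hypPt] using E0
      have h4 : (4:ℝ)*a^2 ≠ 0 := by positivity
      have key : ((1+m^2)*a^4 + (-4*m*cx-4*m^2*cy)*a^3 + (2*m^2-2+4*m^2*(cx^2+cy^2-r^2))*a^2 + (4*m*cx-4*m^2*cy)*a + (1+m^2)) * (4*a^2) = 0 := by
        field_simp at E
        linear_combination (4*a^2) * E
      exact (mul_eq_zero.1 key).resolve_right h4
    have Pb : (1+m^2)*b^4 + (-4*m*cx-4*m^2*cy)*b^3 + (2*m^2-2+4*m^2*(cx^2+cy^2-r^2))*b^2 + (4*m*cx-4*m^2*cy)*b + (1+m^2) = 0 := by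
      have E0 := h (hypPt m b) (by simp)
      have E : ((1/(2*m))*(b-1/b) - cx)^2 + ((1/2)*(b+1/b) - cy)^2 = r^2 := by
        simpa [hypPt] using E0
      have h4 : (4:ℝ)*b^2 ≠ 0 := by positivity
      have key : ((1+m^2)*b^4 + (-4*m*cx-4*m^2*cy)*b^3 + (2*m^2-2+4*m^2*(cx^2+cy^2-r^2))*b^2 + (4*m*cx-4*m^2*cy)*b + (1+m^2)) * (4*b^2) = 0 := by
        field_simp at E
        linear_combination (4*b^2) * E
      exact (mul_eq_zero.1 key).resolve_right h4
    have Pc : (1+m^2)*c^4 + (-4*m*cx-4*m^2*cy)*c^3 + (2*m^2-2+4*m^2*(cx^2+cy^2-r^2))*c^2 + (4*m*cx-4*m^2*cy)*c + (1+m^2) = 0 := by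
      have E0 := h (hypPt m c) (by simp)
      have E : ((1/(2*m))*(c-1/c) - cx)^2 + ((1/2)*(c+1/c) - cy)^2 = r^2 := by
        simpa [hypPt] using E0
      have h4 : (4:ℝ)*c^2 ≠ 0 := by positivity
      have key : ((1+m^2)*c^4 + (-4*m*cx-4*m^2*cy)*c^3 + (2*m^2-2+4*m^2*(cx^2+cy^2-r^2))*c^2 + (4*m*cx-4*m^2*cy)*c + (1+m^2)) * (4*c^2) = 0 := by
        field_simp at E
        linear_combination (4*c^2) * E
      exact (mul_eq_zero.1 key).resolve_right h4
    have Pd : (1+m^2)*d^4 + (-4*m*cx-4*m^2*cy)*d^3 + (2*m^2-2+4*m^2*(cx^2+cy^2-r^2))*d^2 + (4*m*cx-4*m^2*cy)*d + (1+m^2) = 0 := by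
      have E0 := h (hypPt m d) (by simp)
      have E : ((1/(2*m))*(d-1/d) - cx)^2 + ((1/2)*(d+1/d) - cy)^2 = r^2 := by
        simpa [hypPt] using E0
      have h4 : (4:ℝ)*d^2 ≠ 0 := by positivity
      have key : ((1+m^2)*d^4 + (-4*m*cx-4*m^2*cy)*d^3 + (2*m^2-2+4*m^2*(cx^2+cy^2-r^2))*d^2 + (4*m*cx-4*m^2*cy)*d + (1+m^2)) * (4*d^2) = 0 := by
        field_simp at E
        linear_combination (4*d^2) * E
      exact (mul_eq_zero.1 key).resolve_right h4
    have hL : (1:ℝ) + m^2 ≠ 0 := by positivity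
    have hV : (a-b)*((a-c)*((a-d)*((b-c)*((b-d)*(c-d))))) ≠ 0 :=
      mul_ne_zero (sub_ne_zero.2 hab) (mul_ne_zero (sub_ne_zero.2 hac)
        (mul_ne_zero (sub_ne_zero.2 had) (mul_ne_zero (sub_ne_zero.2 hbc)
          (mul_ne_zero (sub_ne_zero.2 hbd) (sub_ne_zero.2 hcd)))))
    have key : ((1:ℝ)+m^2) * ((a-b)*((a-c)*((a-d)*((b-c)*((b-d)*(c-d)))))) * (a*b*c*d - 1) = 0 := by
      linear_combination (b*c*d*(b-c)*(b-d)*(c-d)) * Pa + (-(a*c*d*(a-c)*(a-d)*(c-d))) * Pb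
        + (a*b*d*(a-b)*(a-d)*(b-d)) * Pc + (-(a*b*c*(a-b)*(a-c)*(b-c))) * Pd
    have hfin := (mul_eq_zero.1 key).resolve_left (mul_ne_zero hL hV)
    linarith
  · intro habcd
    have hd' : d = 1/(a*b*c) := by
      field_simp
      linear_combination habcd
    subst hd'
    set CX : ℝ := (1+m^2)*((a+b+c+1/(a*b*c)) - (a*b*c+a*b*(1/(a*b*c))+a*c*(1/(a*b*c))+b*c*(1/(a*b*c))))/(8*m) with hCX
    set CY : ℝ := (1+m^2)*((a+b+c+1/(a*b*c)) + (a*b*c+a*b*(1/(a*b*c))+a*c*(1/(a*b*c))+b*c*(1/(a*b*c))))/(8*m^2) with hCY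
    set VAL : ℝ := (2*m^2 - 2 - (1+m^2)*(a*b+a*c+a*(1/(a*b*c))+b*c+b*(1/(a*b*c))+c*(1/(a*b*c))))/(4*m^2) + CX^2 + CY^2 with hVAL
    have Ha : ((1/(2*m))*((a:ℝ)-1/(a)) - CX)^2 + ((1/2)*((a)+1/(a)) - CY)^2 = VAL := by
      rw [hVAL, hCX, hCY]
      field_simp
      ring
    have Hb : ((1/(2*m))*((b:ℝ)-1/(b)) - CX)^2 + ((1/2)*((b)+1/(b)) - CY)^2 = VAL := by
      rw [hVAL, hCX, hCY]
      field_simp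
      ring
    have Hc : ((1/(2*m))*((c:ℝ)-1/(c)) - CX)^2 + ((1/2)*((c)+1/(c)) - CY)^2 = VAL := by
      rw [hVAL, hCX, hCY]
      field_simp
      ring
    have Hd : ((1/(2*m))*((1/(a*b*c):ℝ)-1/(1/(a*b*c))) - CX)^2 + ((1/2)*((1/(a*b*c))+1/(1/(a*b*c))) - CY)^2 = VAL := by
      rw [hVAL, hCX, hCY]
      field_simp
      ring
    have hpos : 0 ≤ VAL := by
      rw [← Ha]
      positivity
    refine ⟨CX, CY, Real.sqrt VAL, ?_⟩
    rintro P hP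
    rw [Real.sq_sqrt hpos]
    simp only [Set.mem_insert_iff, Set.mem_singleton_iff] at hP
    rcases hP with rfl | rfl | rfl | rfl
    · simpa [hypPt] using Ha
    · simpa [hypPt] using Hb
    · simpa [hypPt] using Hc
    · simpa [hypPt] using Hd
end

section
/- In the configuration of the hyperbola y² - m²x² = 1 with points A, B, C, D of parameters a, b, c, d (abcd = 1), their antipodes A₁, B₂, C₃, D₄ of parameters -a, -b, -c, -d, and P of parameter p: define A₄ = D₄A ∩ A₁P, B₄ = D₄B ∩ B₂P, C₄ = D₄C ∩ C₃P. Then the four points A₄, B₄, C₄, D₄ are concyclic. -/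
/-- The intersection of line `D₄A` (through parameters `-δ`, `α`) with the line through
parameters `-α`, `p`; so `A₄ = ptF m p a d`, `B₄ = ptF m p b d`, `C₄ = ptF m p c d`. -/
noncomputable def ptF (m p α δ : ℝ) : ℝ × ℝ :=
  (((α ^ 2 + 1) * (δ + p) - 2 * α * (δ * p + 1)) / (2 * α * m * (p - δ)),
   ((α ^ 2 - 1) * (δ + p) + 2 * α * (1 - δ * p)) / (2 * α * (p - δ)))

/-- Coefficient `D` of the circle `x² + y² + Dx + Ey + F = 0`. -/
noncomputable def Dc (m p d e1 e3 : ℝ) : ℝ :=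
  (8 * (d * p + 1) - (d + p) * (1 + m ^ 2) * (e1 + e3)) / (4 * m * (p - d))

/-- Coefficient `E` of the circle. -/
noncomputable def Ec (m p d e1 e3 : ℝ) : ℝ :=
  (-8 * m ^ 2 * (1 - d * p) - (d + p) * (1 + m ^ 2) * (e1 - e3)) / (4 * m ^ 2 * (p - d))

/-- Coefficient `F` of the circle. -/
noncomputable def Fc (m p d e1 e2 e3 : ℝ) : ℝ :=
  ((d + p) ^ 2 * (1 + m ^ 2) * e2 / m ^ 2
    - (2 * (d + p) ^ 2 + 4 * (d * p + 1) ^ 2) / m ^ 2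
    + 2 * (d + p) ^ 2 - 4 * (1 - d * p) ^ 2
    + 2 * (d * p + 1) *
        ((8 * (d * p + 1) - (d + p) * (1 + m ^ 2) * (e1 + e3)) / (2 * m)) / m
    - 2 * (1 - d * p) *
        ((-8 * m ^ 2 * (1 - d * p) - (d + p) * (1 + m ^ 2) * (e1 - e3)) / (2 * m ^ 2)))
    / (4 * (p - d) ^ 2)

private lemma circ_to_center (Dv Ev Fv x y : ℝ) (h : x ^ 2 + y ^ 2 + Dv * x + Ev * y + Fv = 0) :
    (x - (-Dv / 2)) ^ 2 + (y - (-Ev / 2)) ^ 2 = (-Dv / 2) ^ 2 + (-Ev / 2) ^ 2 - Fv := by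
  linear_combination h

private lemma ptF_dd (m p d : ℝ) (hm : m ≠ 0) (hd : d ≠ 0) (hpd : p - d ≠ 0) :
    ptF m p d d = hypPt m (-d) := by
  unfold ptF hypPt
  refine Prod.ext ?_ ?_ <;> simp only <;> (field_simp [hd]; ring)

private lemma key (m p d α e1 e2 e3 : ℝ) (hm : m ≠ 0) (hα : α ≠ 0) (hpd : p - d ≠ 0)
    (hroot : α ^ 4 - e1 * α ^ 3 + e2 * α ^ 2 - e3 * α + 1 = 0) :
    (ptF m p α d).1 ^ 2 + (ptF m p α d).2 ^ 2 + Dc m p d e1 e3 * (ptF m p α d).1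
      + Ec m p d e1 e3 * (ptF m p α d).2 + Fc m p d e1 e2 e3 = 0 := by
  have he2 : e2 = (e1 * α ^ 3 + e3 * α - 1 - α ^ 4) / α ^ 2 := by
    field_simp
    linear_combination hroot
  subst he2
  unfold ptF Dc Ec Fc
  simp only
  field_simp
  ring

/-- **Theorem 5.** With `abcd = 1`, the points `A₄ = D₄A ∩ A₁P`, `B₄ = D₄B ∩ B₂P`,
`C₄ = D₄C ∩ C₃P` and `D₄` (parameter `-d`) are concyclic. -/
theorem A4B4C4D4_concyclic (m a b c d p : ℝ) (hm : m ≠ 0)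
    (ha : a ≠ 0) (hb : b ≠ 0) (hc : c ≠ 0) (hd : d ≠ 0) (hp : p ≠ 0)
    (habcd : a * b * c * d = 1) (hpd : p ≠ d) :
    ∃ cx cy r : ℝ,
      ∀ P ∈ ({ptF m p a d, ptF m p b d, ptF m p c d, hypPt m (-d)} : Set (ℝ × ℝ)),
        (P.1 - cx) ^ 2 + (P.2 - cy) ^ 2 = r ^ 2 := by
  have hpd' : p - d ≠ 0 := sub_ne_zero.mpr hpd
  set e1 : ℝ := a + b + c + d with he1
  set e2 : ℝ := a * b + a * c + a * d + b * c + b * d + c * d with he2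
  set e3 : ℝ := a * b * c + a * b * d + a * c * d + b * c * d with he3
  set Dv : ℝ := Dc m p d e1 e3 with hDv
  set Ev : ℝ := Ec m p d e1 e3 with hEv
  set Fv : ℝ := Fc m p d e1 e2 e3 with hFv
  have key4 : ∀ α : ℝ, α ≠ 0 → (α - a) * (α - b) * (α - c) * (α - d) = 0 →
      ((ptF m p α d).1 - (-Dv / 2)) ^ 2 + ((ptF m p α d).2 - (-Ev / 2)) ^ 2
        = (-Dv / 2) ^ 2 + (-Ev / 2) ^ 2 - Fv := by
    intro α hα hz
    refine circ_to_center _ _ _ _ _ (key m p d α e1 e2 e3 hm hα hpd' ?_)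
    rw [he1, he2, he3]
    linear_combination hz - habcd
  have hD4 : ((hypPt m (-d)).1 - (-Dv / 2)) ^ 2 + ((hypPt m (-d)).2 - (-Ev / 2)) ^ 2
      = (-Dv / 2) ^ 2 + (-Ev / 2) ^ 2 - Fv := by
    rw [← ptF_dd m p d hm hd hpd']
    exact key4 d hd (by ring)
  have hRnn : 0 ≤ (-Dv / 2) ^ 2 + (-Ev / 2) ^ 2 - Fv := by
    rw [← hD4]; positivity
  refine ⟨-Dv / 2, -Ev / 2, Real.sqrt ((-Dv / 2) ^ 2 + (-Ev / 2) ^ 2 - Fv), ?_⟩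
  have hr2 : Real.sqrt ((-Dv / 2) ^ 2 + (-Ev / 2) ^ 2 - Fv) ^ 2
      = (-Dv / 2) ^ 2 + (-Ev / 2) ^ 2 - Fv := Real.sq_sqrt hRnn
  intro P hP
  rw [hr2]
  simp only [Set.mem_insert_iff, Set.mem_singleton_iff] at hP
  rcases hP with rfl | rfl | rfl | rfl
  · exact key4 a ha (by ring)
  · exact key4 b hb (by ring)
  · exact key4 c hc (by ring)
  · exact hD4
end

section
/- Let ABC be a triangle, T a point not on its sides, and Σ a circle through T. Let X, Y, Z be the second intersection points of Σ with the perpendiculars from T to BC, CA, AB respectively. Then triangle XYZ is indirectly similar to triangle ABC. -/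
set_option maxHeartbeats 2000000


open ComplexConjugate

lemma circ_eq {P O : ℂ} {r : ℝ} (h : dist P O = r) :
    (P - O) * (conj P - conj O) = (r:ℝ)^2 := by
  have : (P - O) * conj (P - O) = (r:ℂ)^2 := by
    rw [Complex.mul_conj, Complex.dist_eq] at *
    rw [Complex.normSq_eq_norm_sq, h]; push_cast; ring
  rw [map_sub] at this; exact_mod_cast this

lemma chord {O T P q : ℂ} {r : ℝ} (hT : dist T O = r) (hP : dist P O = r)
    (hPT : P ≠ T) (hperp : ((P - T) * conj q).re = 0) :
    (P - O) * ((T - O) * conj q) = (r:ℂ)^2 * q := by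
  have hx2 := circ_eq hP
  have ht2 := circ_eq hT
  have h0 : ((P - T) * conj q) + conj ((P - T) * conj q) = 0 := by
    rw [Complex.add_conj, hperp]; norm_num
  simp only [map_mul, map_sub, Complex.conj_conj] at h0
  have key : ((P - O) - (T - O)) *
      ((P - O) * (T - O) * conj q - (r:ℂ)^2 * q) = 0 := by
    push_cast at hx2 ht2
    linear_combination ((P-O)*(T-O)) * h0 - ((T-O)*q) * hx2 + ((P-O)*q) * ht2
  rcases mul_eq_zero.mp key with h | h
  · exact absurd (by linear_combination h) hPT
  · linear_combination h

lemma ncol {a b c : ℂ} (h : ¬ Collinear ℝ ({a, b, c} : Set ℂ)) :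
    (c - b) * (conj a - conj c) - (a - c) * (conj c - conj b) ≠ 0 := by
  intro hN
  apply h
  rcases eq_or_ne a c with rfl | hac
  · exact (collinear_pair ℝ a b).subset (by intro x hx; simp at hx ⊢; tauto)
  have hac' : a - c ≠ 0 := sub_ne_zero.mpr hac
  have him : (c - b) * (conj a - conj c)
      = (((c - b) * (conj a - conj c)).re : ℂ) := by
    have hc : conj ((c - b) * (conj a - conj c)) = (c - b) * (conj a - conj c) := by
      rw [map_mul, map_sub, map_sub, Complex.conj_conj, Complex.conj_conj]
      linear_combination -hN
    rw [Complex.conj_eq_iff_re] at hc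
    exact hc.symm
  set sr : ℝ := ((c - b) * (conj a - conj c)).re with hsr
  set n : ℝ := Complex.normSq (a - c) with hn
  have hn0 : n ≠ 0 := (Complex.normSq_pos.mpr hac').ne'
  have hnsq : (a - c) * (conj a - conj c) = (n : ℂ) := by
    rw [hn, ← Complex.mul_conj, map_sub]
  have hb : ∃ t : ℝ, b = t • (a - c) + c := by
    refine ⟨-(sr / n), ?_⟩
    have hkey : (b - c) * (n : ℂ) = -(sr : ℂ) * (a - c) := by
      linear_combination (-(b - c)) * hnsq - (a - c) * him
    have hn0' : (n : ℂ) ≠ 0 := by exact_mod_cast hn0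
    rw [Complex.real_smul]
    push_cast
    field_simp
    linear_combination hkey
  rw [collinear_iff_of_mem (show c ∈ ({a, b, c} : Set ℂ) by simp)]
  refine ⟨a - c, fun p hp => ?_⟩
  rcases hp with rfl | rfl | rfl
  · exact ⟨1, by simp⟩
  · exact hb
  · exact ⟨0, by simp⟩

/-- Let `ABC` be a triangle, `T` a point not on its sides, and `Σ` a circle through `T`.
If `X, Y, Z` are the second intersections of `Σ` with the perpendiculars from `T` to
`BC, CA, AB` respectively, then triangle `XYZ` is indirectly similar to `ABC`:
some orientation-reversing similarity `z ↦ w conj z + v` maps `A, B, C` to `X, Y, Z`. -/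
theorem XYZ_indirectly_similar_to_ABC (A B C T X Y Z O : ℂ) (r : ℝ) (hr : 0 < r)
    (hABC : ¬ Collinear ℝ ({A, B, C} : Set ℂ))
    (hTa : ¬ Collinear ℝ ({B, C, T} : Set ℂ))
    (hTb : ¬ Collinear ℝ ({C, A, T} : Set ℂ))
    (hTc : ¬ Collinear ℝ ({A, B, T} : Set ℂ))
    (hT : dist T O = r)
    -- X : second intersection with Σ of the perpendicular from T to BC
    (hX : dist X O = r) (hXT : X ≠ T) (hXperp : ((X - T) * conj (C - B)).re = 0)
    -- Y : second intersection with Σ of the perpendicular from T to CA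
    (hY : dist Y O = r) (hYT : Y ≠ T) (hYperp : ((Y - T) * conj (A - C)).re = 0)
    -- Z : second intersection with Σ of the perpendicular from T to AB
    (hZ : dist Z O = r) (hZT : Z ≠ T) (hZperp : ((Z - T) * conj (B - A)).re = 0) :
    ∃ w v : ℂ, w ≠ 0 ∧ X = w * conj A + v ∧ Y = w * conj B + v ∧ Z = w * conj C + v := by
  -- distinctness of vertices
  have hAB : A ≠ B := by
    rintro rfl
    exact hABC ((collinear_pair ℝ A C).subset (by intro x hx; simp at hx ⊢; tauto))
  have hBC : B ≠ C := by
    rintro rfl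
    exact hABC ((collinear_pair ℝ A B).subset (by intro x hx; simp at hx ⊢; tauto))
  have hCA : C ≠ A := by
    rintro rfl
    exact hABC ((collinear_pair ℝ C B).subset (by intro x hx; simp at hx ⊢; tauto))
  have ht0 : T - O ≠ 0 := sub_ne_zero.mpr (dist_pos.mp (by rw [hT]; exact hr))
  have hr0 : (r : ℂ) ≠ 0 := Complex.ofReal_ne_zero.mpr hr.ne'
  have hcb : conj C - conj B ≠ 0 :=
    sub_ne_zero.mpr fun h => hBC ((starRingEnd ℂ).injective h.symm)
  have hac : conj A - conj C ≠ 0 :=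
    sub_ne_zero.mpr fun h => hCA ((starRingEnd ℂ).injective h.symm)
  have hab : conj A - conj B ≠ 0 :=
    sub_ne_zero.mpr fun h => hAB ((starRingEnd ℂ).injective h)
  have hN := ncol hABC
  have ex := chord hT hX hXT hXperp
  have ey := chord hT hY hYT hYperp
  have ez := chord hT hZ hZT hZperp
  rw [map_sub] at ex ey ez
  have hD : (T - O) * (conj C - conj B) * (conj A - conj C) * (conj A - conj B) ≠ 0 :=
    mul_ne_zero (mul_ne_zero (mul_ne_zero ht0 hcb) hac) hab
  refine ⟨(r:ℂ)^2 * ((C - B) * (conj A - conj C) - (A - C) * (conj C - conj B)) /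
      ((T - O) * (conj C - conj B) * (conj A - conj C) * (conj A - conj B)),
    X - (r:ℂ)^2 * ((C - B) * (conj A - conj C) - (A - C) * (conj C - conj B)) /
      ((T - O) * (conj C - conj B) * (conj A - conj C) * (conj A - conj B)) * conj A,
    ?_, by ring, ?_, ?_⟩
  · exact div_ne_zero (mul_ne_zero (pow_ne_zero _ hr0) hN)
      (mul_ne_zero (mul_ne_zero (mul_ne_zero ht0 hcb) hac) hab)
  · have h2 : Y - X = (r:ℂ)^2 * ((C - B) * (conj A - conj C) - (A - C) * (conj C - conj B)) *
        (conj B - conj A) / ((T - O) * (conj C - conj B) * (conj A - conj C) * (conj A - conj B)) := by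
      rw [eq_div_iff hD]
      linear_combination ((conj C - conj B) * (conj A - conj B)) * ey
        - ((conj A - conj C) * (conj A - conj B)) * ex
    linear_combination h2
  · have h3 : Z - X = (r:ℂ)^2 * ((C - B) * (conj A - conj C) - (A - C) * (conj C - conj B)) *
        (conj C - conj A) / ((T - O) * (conj C - conj B) * (conj A - conj C) * (conj A - conj B)) := by
      rw [eq_div_iff hD]
      linear_combination (-((conj C - conj B) * (conj A - conj C))) * ez
        - ((conj A - conj C) * (conj A - conj B)) * ex
    linear_combination h3
end

section
/- Let φ be an indirect similarity of the Euclidean plane mapping triangle ABC (on its circumcircle Γ) to triangle XYZ (on a circle Σ), with fixed point P, and let D, E, F be the second intersections of AP, BP, CP with Γ and U, V, W their images under φ. Then the midpoints of segments AX, BY, CZ, DU, EV, FW all lie on a common conic. -/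
open ComplexConjugate

noncomputable def ccc (w v O : ℂ) : ℂ :=
  -v + w * conj v - ((1 - Complex.normSq w : ℝ) : ℂ) * O

lemma poly_eq (w v O : ℂ) (r : ℝ) (Q : ℂ) :
    (4 * Complex.normSq (1 - w)) * Q.re ^ 2
      + (-16 * w.im) * (Q.re * Q.im)
      + (4 * Complex.normSq (1 + w)) * Q.im ^ 2
      + (4 * ((1 - w) * conj (ccc w v O)).re) * Q.re
      + (4 * ((Complex.I * (1 + w)) * conj (ccc w v O)).re) * Q.im
      + (Complex.normSq (ccc w v O) - r ^ 2 * (1 - Complex.normSq w) ^ 2)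
    = Complex.normSq (2 * Q - v - w * conj (2 * Q - v)
        - ((1 - Complex.normSq w : ℝ) : ℂ) * O)
      - r ^ 2 * (1 - Complex.normSq w) ^ 2 := by
  simp only [ccc, Complex.normSq_apply, Complex.mul_re, Complex.mul_im, Complex.sub_re,
    Complex.sub_im, Complex.add_re, Complex.add_im, Complex.neg_re, Complex.neg_im,
    Complex.conj_re, Complex.conj_im, Complex.one_re, Complex.one_im, Complex.I_re,
    Complex.I_im, Complex.ofReal_re, Complex.ofReal_im, Complex.re_ofNat, Complex.im_ofNat]
  ring

lemma on_circ (w v O : ℂ) (r : ℝ) (z : ℂ) (hz : dist z O = r) :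
    Complex.normSq (2 * ((z + w * conj z + v) / 2) - v
        - w * conj (2 * ((z + w * conj z + v) / 2) - v)
        - ((1 - Complex.normSq w : ℝ) : ℂ) * O)
      - r ^ 2 * (1 - Complex.normSq w) ^ 2 = 0 := by
  have h1 : 2 * ((z + w * conj z + v) / 2) - v = z + w * conj z := by ring
  rw [h1]
  have h2 : z + w * conj z - w * conj (z + w * conj z)
      - ((1 - Complex.normSq w : ℝ) : ℂ) * O
      = ((1 - Complex.normSq w : ℝ) : ℂ) * (z - O) := by
    simp only [map_add, map_mul, Complex.conj_conj]
    push_cast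
    linear_combination (-z) * (Complex.mul_conj w)
  rw [h2, Complex.normSq_mul, Complex.normSq_ofReal]
  have h3 : Complex.normSq (z - O) = r ^ 2 := by
    rw [← Complex.sq_norm, ← Complex.dist_eq, hz]
  rw [h3]; ring

/-- **Theorem 10 (midpoint conic).** Let `φ : z ↦ w conj z + v` be an indirect
similarity fixing `P`, mapping triangle `ABC` (on its circumcircle `Γ`) to `XYZ`,
and let `D, E, F` be the second intersections of `AP, BP, CP` with `Γ` and
`U = φ(D)`, `V = φ(E)`, `W = φ(F)`.  Then the midpoints of `AX, BY, CZ, DU, EV, FW`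
all lie on a common conic (the zero set of a nonzero polynomial of degree ≤ 2). -/
theorem midpoint_conic (A B C D E F P O : ℂ) (r : ℝ) (hr : 0 < r)
    (w v : ℂ) (hw : w ≠ 0)
    (φ : ℂ → ℂ) (hφ : ∀ z, φ z = w * conj z + v) (hfix : φ P = P)
    (hABC : ¬ Collinear ℝ ({A, B, C} : Set ℂ))
    (hA : dist A O = r) (hB : dist B O = r) (hC : dist C O = r)
    (hP : dist P O ≠ r) (hPA : P ≠ A) (hPB : P ≠ B) (hPC : P ≠ C)
    (hD : dist D O = r) (hDA : D ≠ A) (hDcol : Collinear ℝ ({A, P, D} : Set ℂ))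
    (hE : dist E O = r) (hEB : E ≠ B) (hEcol : Collinear ℝ ({B, P, E} : Set ℂ))
    (hF : dist F O = r) (hFC : F ≠ C) (hFcol : Collinear ℝ ({C, P, F} : Set ℂ)) :
    ∃ α β γ δ ε ζ : ℝ, (α, β, γ, δ, ε, ζ) ≠ (0, 0, 0, 0, 0, 0) ∧
      ∀ Q ∈ ({(A + φ A) / 2, (B + φ B) / 2, (C + φ C) / 2,
              (D + φ D) / 2, (E + φ E) / 2, (F + φ F) / 2} : Set ℂ),
        α * Q.re ^ 2 + β * (Q.re * Q.im) + γ * Q.im ^ 2 + δ * Q.re + ε * Q.im + ζ = 0 := by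
  refine ⟨4 * Complex.normSq (1 - w), -16 * w.im, 4 * Complex.normSq (1 + w),
    4 * ((1 - w) * conj (ccc w v O)).re, 4 * ((Complex.I * (1 + w)) * conj (ccc w v O)).re,
    Complex.normSq (ccc w v O) - r ^ 2 * (1 - Complex.normSq w) ^ 2, ?_, ?_⟩
  · intro h
    simp only [Prod.mk.injEq] at h
    obtain ⟨h1, -, h2, -⟩ := h
    have e1 : (1 : ℂ) - w = 0 := by
      have := Complex.normSq_eq_zero.mp (by linarith : Complex.normSq (1 - w) = 0)
      exact this
    have e2 : (1 : ℂ) + w = 0 := by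
      have := Complex.normSq_eq_zero.mp (by linarith : Complex.normSq (1 + w) = 0)
      exact this
    exfalso
    have : (2 : ℂ) = 0 := by linear_combination e1 + e2
    norm_num at this
  · intro Q hQ
    have key : ∀ z : ℂ, dist z O = r → Q = (z + φ z) / 2 →
        4 * Complex.normSq (1 - w) * Q.re ^ 2 + -16 * w.im * (Q.re * Q.im)
          + 4 * Complex.normSq (1 + w) * Q.im ^ 2
          + 4 * ((1 - w) * conj (ccc w v O)).re * Q.re
          + 4 * ((Complex.I * (1 + w)) * conj (ccc w v O)).re * Q.im
          + (Complex.normSq (ccc w v O) - r ^ 2 * (1 - Complex.normSq w) ^ 2) = 0 := by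
      intro z hz hQz
      rw [hQz, hφ z]
      have harr : (z + (w * conj z + v)) / 2 = (z + w * conj z + v) / 2 := by ring
      rw [harr, poly_eq w v O r, on_circ w v O r z hz]
    simp only [Set.mem_insert_iff, Set.mem_singleton_iff] at hQ
    rcases hQ with rfl | rfl | rfl | rfl | rfl | rfl
    · exact key A hA rfl
    · exact key B hB rfl
    · exact key C hC rfl
    · exact key D hD rfl
    · exact key E hE rfl
    · exact key F hF rfl
end

section
/- Let ABC be a triangle, T a point not on its sides, and Σ a circle through T; let X, Y, Z be the second intersections of Σ with the perpendiculars from T to BC, CA, AB. Then the perpendiculars from A to YZ, from B to ZX, and from C to XY are concurrent, i.e., triangles ABC and XYZ are orthologic in both directions. -/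
open ComplexConjugate

/-- Let `ABC` be a triangle, `T` a point not on its sides, `Σ` a circle through `T`,
and `X, Y, Z` the second intersections of `Σ` with the perpendiculars from `T` to
`BC, CA, AB`.  Then the perpendiculars from `A` to `YZ`, from `B` to `ZX` and from
`C` to `XY` are concurrent (at a point `J`): triangles `ABC` and `XYZ` are
orthologic in both directions. -/
theorem reciprocal_orthology (A B C T X Y Z O : ℂ) (r : ℝ) (hr : 0 < r)
    (hABC : ¬ Collinear ℝ ({A, B, C} : Set ℂ))
    (hXYZ : ¬ Collinear ℝ ({X, Y, Z} : Set ℂ))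
    (hTa : ¬ Collinear ℝ ({B, C, T} : Set ℂ))
    (hTb : ¬ Collinear ℝ ({C, A, T} : Set ℂ))
    (hTc : ¬ Collinear ℝ ({A, B, T} : Set ℂ))
    (hT : dist T O = r)
    (hX : dist X O = r) (hXT : X ≠ T) (hXperp : ((X - T) * conj (C - B)).re = 0)
    (hY : dist Y O = r) (hYT : Y ≠ T) (hYperp : ((Y - T) * conj (A - C)).re = 0)
    (hZ : dist Z O = r) (hZT : Z ≠ T) (hZperp : ((Z - T) * conj (B - A)).re = 0) :
    ∃ J : ℂ, ((J - A) * conj (Z - Y)).re = 0 ∧ ((J - B) * conj (X - Z)).re = 0 ∧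
      ((J - C) * conj (Y - X)).re = 0 := by
  classical
  set u : ℂ := Z - Y with hu_def
  set v : ℂ := X - Z with hv_def
  -- The determinant is nonzero since X, Y, Z are not collinear.
  have hD : (v * conj u).im ≠ 0 := by
    intro hDim
    apply hXYZ
    by_cases hu0 : u = 0
    · have hZY : Z = Y := by
        have := sub_eq_zero.mp hu0
        exact this
      have hsub : ({X, Y, Z} : Set ℂ) ⊆ {X, Y} := by
        intro p hp
        simp only [Set.mem_insert_iff, Set.mem_singleton_iff] at hp ⊢
        rcases hp with h | h | h
        · exact Or.inl h
        · exact Or.inr h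
        · exact Or.inr (h.trans hZY)
      exact (collinear_pair ℝ X Y).subset hsub
    · have hcu : (conj u : ℂ) ≠ 0 := by
        simpa using hu0
      have hns : Complex.normSq u ≠ 0 := by
        simpa [Complex.normSq_eq_zero] using hu0
      set t : ℝ := (v * conj u).re / Complex.normSq u with ht
      have hv : v = (t : ℂ) * u := by
        have h1 : v * conj u = (((v * conj u).re : ℝ) : ℂ) := by
          rw [Complex.ext_iff]
          simp [hDim]
        have h2 : ((t : ℂ) * u) * conj u = (((v * conj u).re : ℝ) : ℂ) := by
          rw [mul_assoc, Complex.mul_conj, ht, Complex.ofReal_div, div_mul_cancel₀]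
          exact_mod_cast hns
        exact mul_right_cancel₀ hcu (h1.trans h2.symm)
      rw [collinear_iff_of_mem (show Y ∈ ({X, Y, Z} : Set ℂ) by simp)]
      refine ⟨u, ?_⟩
      intro p hp
      simp only [Set.mem_insert_iff, Set.mem_singleton_iff] at hp
      rcases hp with h | h | h
      · refine ⟨t + 1, ?_⟩
        have hX' : X = v + Z := by rw [hv_def]; ring
        have hZ' : Z = u + Y := by rw [hu_def]; ring
        rw [h, hX', hZ', hv]
        simp only [vadd_eq_add, Complex.real_smul, Complex.ofReal_add, Complex.ofReal_one]
        ring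
      · exact ⟨0, by simp [h, vadd_eq_add]⟩
      · refine ⟨1, ?_⟩
        have hZ' : Z = u + Y := by rw [hu_def]; ring
        rw [h, hZ']
        simp [vadd_eq_add]
  -- Now construct J explicitly.
  set D : ℝ := (v * conj u).im with hD_def
  set a : ℝ := (A * conj u).re with ha_def
  set b : ℝ := (B * conj v).re with hb_def
  have hDC : (D : ℂ) ≠ 0 := Complex.ofReal_ne_zero.mpr hD
  set J : ℂ := ((b : ℂ) * (Complex.I * u) - (a : ℂ) * (Complex.I * v)) / (D : ℂ) with hJ_def
  have r1 : (Complex.I * (u * conj u)).re = 0 := by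
    rw [Complex.mul_conj]
    simp
  have r2 : (Complex.I * (v * conj u)).re = -D := by
    rw [hD_def]
    simp [Complex.mul_re, Complex.I_re, Complex.I_im]
  have r3 : (Complex.I * (v * conj v)).re = 0 := by
    rw [Complex.mul_conj]
    simp
  have r4 : (Complex.I * (u * conj v)).re = D := by
    rw [hD_def]
    simp only [Complex.mul_re, Complex.mul_im, Complex.I_re, Complex.I_im,
      Complex.conj_re, Complex.conj_im]
    ring
  have e1 : ((J - A) * conj u).re = 0 := by
    have key : (D : ℂ) * ((J - A) * conj u) =
        (b : ℂ) * (Complex.I * (u * conj u)) - (a : ℂ) * (Complex.I * (v * conj u))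
          - (D : ℂ) * (A * conj u) := by
      rw [hJ_def]
      field_simp
    have hre := congrArg Complex.re key
    simp only [Complex.re_ofReal_mul, Complex.sub_re, r1, r2, ← ha_def] at hre
    have hx : D * ((J - A) * conj u).re = 0 := by linear_combination hre
    exact (mul_eq_zero.mp hx).resolve_left hD
  have e2 : ((J - B) * conj v).re = 0 := by
    have key : (D : ℂ) * ((J - B) * conj v) =
        (b : ℂ) * (Complex.I * (u * conj v)) - (a : ℂ) * (Complex.I * (v * conj v))
          - (D : ℂ) * (B * conj v) := by
      rw [hJ_def]
      field_simp
    have hre := congrArg Complex.re key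
    simp only [Complex.re_ofReal_mul, Complex.sub_re, r3, r4, ← hb_def] at hre
    have hx : D * ((J - B) * conj v).re = 0 := by linear_combination hre
    exact (mul_eq_zero.mp hx).resolve_left hD
  have hS : (((A - C) * conj u + (B - C) * conj v)).re = 0 := by
    rw [hu_def, hv_def]
    simp only [Complex.add_re, Complex.mul_re, Complex.sub_re, Complex.sub_im,
      Complex.conj_re, Complex.conj_im] at hXperp hYperp hZperp ⊢
    ring_nf at hXperp hYperp hZperp ⊢
    linarith [hXperp, hYperp, hZperp]
  have hw : conj (Y - X) = -(conj u + conj v) := by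
    have h : Y - X = -(u + v) := by rw [hu_def, hv_def]; ring
    rw [h, map_neg, map_add]
  refine ⟨J, e1, e2, ?_⟩
  have expand : (J - C) * conj (Y - X) =
      -((J - A) * conj u) - ((J - B) * conj v) - ((A - C) * conj u + (B - C) * conj v) := by
    rw [hw]; ring
  rw [expand]
  simp only [Complex.sub_re, Complex.neg_re, e1, e2, hS]
  ring
end
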